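/- Let G be a finitely generated group and let H be a subgroup of G of finite index. Then rk(H) - 1 ≤ [G : H] · (rk(G) - 1). -/

import Mathlib

open Subgroup

theorem exists_schreier_transversal {G : Type*} [Group G] (H : Subgroup G) [Finite (G ⧸ H)]
    (S : Set G) (hS : Subgroup.closure S = ⊤) :
    ∃ (t : G ⧸ H → G) (D : G ⧸ H → ℕ),
      (∀ q, ((t q : G) : G ⧸ H) = q) ∧ t ((1 : G) : G ⧸ H) = 1 ∧
      ∀ q, q ≠ ((1 : G) : G ⧸ H) → ∃ s ∈ S, ∃ p, D p < D q ∧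
        ((q = s • p ∧ t q = s * t p) ∨ (p = s • q ∧ t q = s⁻¹ * t p)) := by
  classical
  set base : G ⧸ H := ((1 : G) : G ⧸ H) with hbase
  let A : ℕ → Set (G ⧸ H) := fun n => Nat.rec {base}
    (fun _ An => An ∪ {q | ∃ s ∈ S, ∃ p ∈ An, q = s • p ∨ p = s • q}) n
  have hA0 : A 0 = {base} := rfl
  have hAsucc : ∀ n, A (n + 1) =
      A n ∪ {q | ∃ s ∈ S, ∃ p ∈ A n, q = s • p ∨ p = s • q} := fun n => rfl
  have hAmono : ∀ n, A n ⊆ A (n + 1) := fun n => by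
    rw [hAsucc]; exact Set.subset_union_left
  -- every coset is reachable
  have hlist : ∀ l : List G, (∀ y ∈ l, y ∈ S ∪ S⁻¹) → ∃ n, ((l.prod : G) : G ⧸ H) ∈ A n := by
    intro l
    induction l with
    | nil =>
      intro _
      exact ⟨0, by simp [hA0, hbase]⟩
    | cons x l ih =>
      intro hl
      obtain ⟨n, hn⟩ := ih (fun y hy => hl y (List.mem_cons_of_mem x hy))
      have hx := hl x List.mem_cons_self
      have hstep : ((x :: l).prod : G ⧸ H) = x • ((l.prod : G) : G ⧸ H) := by
        rw [List.prod_cons, MulAction.Quotient.smul_mk, smul_eq_mul]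
      refine ⟨n + 1, ?_⟩
      rw [hstep, hAsucc]
      rcases hx with hx | hx
      · exact Or.inr ⟨x, hx, _, hn, Or.inl rfl⟩
      · refine Or.inr ⟨x⁻¹, Set.mem_inv.mp hx, _, hn, Or.inr ?_⟩
        rw [inv_smul_smul]
  have htot : ∀ q : G ⧸ H, ∃ n, q ∈ A n := by
    intro q
    obtain ⟨g, rfl⟩ := QuotientGroup.mk_surjective q
    have hg : g ∈ Subgroup.closure S := hS ▸ Subgroup.mem_top g
    rw [← Subgroup.mem_toSubmonoid, Subgroup.closure_toSubmonoid] at hg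
    obtain ⟨l, hl, hprod⟩ := Submonoid.exists_list_of_mem_closure hg
    exact hprod ▸ hlist l hl
  have inst : ∀ q : G ⧸ H, DecidablePred fun n => q ∈ A n := fun q n => Classical.propDecidable _
  let D : G ⧸ H → ℕ := fun q => @Nat.find _ (inst q) (htot q)
  have hDspec : ∀ q, q ∈ A (D q) := fun q => @Nat.find_spec _ (inst q) (htot q)
  have hDle : ∀ q n, q ∈ A n → D q ≤ n := fun q n h => @Nat.find_min' _ (inst q) (htot q) n h
  have hDbase : D base = 0 := Nat.le_zero.mp (hDle base 0 (by rw [hA0]; rfl))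
  -- build partial transversals by induction
  have key : ∀ n : ℕ, ∃ t : G ⧸ H → G, t base = 1 ∧
      (∀ q, D q ≤ n → ((t q : G) : G ⧸ H) = q) ∧
      (∀ q, D q ≤ n → q ≠ base → ∃ s ∈ S, ∃ p, D p < D q ∧
        ((q = s • p ∧ t q = s * t p) ∨ (p = s • q ∧ t q = s⁻¹ * t p))) := by
    intro n
    induction n with
    | zero =>
      refine ⟨fun _ => 1, rfl, ?_, ?_⟩
      · intro q hq
        have : q ∈ A 0 := Nat.le_zero.mp hq ▸ hDspec q
        rw [hA0, Set.mem_singleton_iff] at this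
        rw [this]
      · intro q hq hq'
        have : q ∈ A 0 := Nat.le_zero.mp hq ▸ hDspec q
        rw [hA0] at this
        exact absurd this hq'
    | succ n ih =>
      obtain ⟨tn, htn1, htn2, htn3⟩ := ih
      set t : G ⧸ H → G := fun q =>
        if hq : D q ≤ n then tn q
        else @dite _ (∃ s, s ∈ S ∧ ∃ p, p ∈ A n ∧ (q = s • p ∨ p = s • q))
          (Classical.propDecidable _) (fun hx =>
          @ite _ (q = hx.choose • hx.choose_spec.2.choose) (Classical.propDecidable _)
            (hx.choose * tn hx.choose_spec.2.choose)
            (hx.choose⁻¹ * tn hx.choose_spec.2.choose))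
          (fun _ => 1) with ht_def
      have hteq : ∀ q, D q ≤ n → t q = tn q := fun q hq => dif_pos hq
      -- key facts about new cosets
      have hnew : ∀ q, D q = n + 1 →
          ∃ s ∈ S, ∃ p, D p ≤ n ∧
            ((q = s • p ∧ t q = s * tn p) ∨ (p = s • q ∧ t q = s⁻¹ * tn p)) := by
        intro q hq
        have hq' : ¬ D q ≤ n := by omega
        have hqA : q ∈ A (n + 1) := hq ▸ hDspec q
        have hqA' : q ∉ A n := fun h => hq' (hDle q n h)
        rw [hAsucc] at hqA
        have hx : ∃ s, s ∈ S ∧ ∃ p, p ∈ A n ∧ (q = s • p ∨ p = s • q) := by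
          rcases hqA with h | h
          · exact absurd h hqA'
          · exact h
        set s := hx.choose with hs
        set p := hx.choose_spec.2.choose with hp
        have hsS : s ∈ S := hx.choose_spec.1
        have hpA : p ∈ A n := hx.choose_spec.2.choose_spec.1
        have hor : q = s • p ∨ p = s • q := hx.choose_spec.2.choose_spec.2
        have htq : t q = @ite _ (q = s • p) (Classical.propDecidable _)
            (s * tn p) (s⁻¹ * tn p) := by
          rw [ht_def]
          simp only [dif_neg hq', dif_pos hx]
          rfl
        rcases Classical.em (q = s • p) with hqs | hqs
        · exact ⟨s, hsS, p, hDle p n hpA, Or.inl ⟨hqs, by rw [htq, if_pos hqs]⟩⟩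
        · have hps : p = s • q := hor.resolve_left hqs
          exact ⟨s, hsS, p, hDle p n hpA, Or.inr ⟨hps, by rw [htq, if_neg hqs]⟩⟩
      refine ⟨t, by rw [hteq base (by omega), htn1], ?_, ?_⟩
      · intro q hq
        rcases Nat.lt_or_ge n (D q) with h | h
        · have hq1 : D q = n + 1 := by omega
          obtain ⟨s, hsS, p, hpD, hcase⟩ := hnew q hq1
          rcases hcase with ⟨hqe, hte⟩ | ⟨hpe, hte⟩
          · rw [hte, ← smul_eq_mul, ← MulAction.Quotient.smul_mk, htn2 p hpD]
            exact hqe.symm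
          · rw [hte, ← smul_eq_mul, ← MulAction.Quotient.smul_mk, htn2 p hpD, hpe, inv_smul_smul]
        · rw [hteq q h]; exact htn2 q h
      · intro q hq hqb
        rcases Nat.lt_or_ge n (D q) with h | h
        · have hq1 : D q = n + 1 := by omega
          obtain ⟨s, hsS, p, hpD, hcase⟩ := hnew q hq1
          have htp : t p = tn p := hteq p hpD
          refine ⟨s, hsS, p, by omega, ?_⟩
          rcases hcase with ⟨hqe, hte⟩ | ⟨hpe, hte⟩
          · exact Or.inl ⟨hqe, by rw [hte, htp]⟩
          · exact Or.inr ⟨hpe, by rw [hte, htp]⟩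
        · obtain ⟨s, hsS, p, hpD, hcase⟩ := htn3 q h hqb
          have htp : t p = tn p := hteq p (by omega)
          have htq : t q = tn q := hteq q h
          refine ⟨s, hsS, p, hpD, ?_⟩
          rcases hcase with ⟨hqe, hte⟩ | ⟨hpe, hte⟩
          · exact Or.inl ⟨hqe, by rw [htq, hte, htp]⟩
          · exact Or.inr ⟨hpe, by rw [htq, hte, htp]⟩
  haveI := Fintype.ofFinite (G ⧸ H)
  obtain ⟨t, ht1, ht2, ht3⟩ := key (Finset.univ.sup D)
  have hDall : ∀ q, D q ≤ Finset.univ.sup D := fun q => Finset.le_sup (Finset.mem_univ q)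
  exact ⟨t, D, fun q => ht2 q (hDall q), ht1, fun q hq => ht3 q (hDall q) hq⟩

/-- Reidemeister–Schreier bound: if `H` is a finite index subgroup of a finitely
generated group `G`, then `rk(H) - 1 ≤ [G : H] · (rk(G) - 1)`. -/
theorem rank_sub_one_le_index_mul_rank_sub_one
    (G : Type*) [Group G] [Group.FG G] (H : Subgroup G) [Group.FG ↥H]
    (hH : H.index ≠ 0) :
    (Group.rank ↥H : ℤ) - 1 ≤ (H.index : ℤ) * ((Group.rank G : ℤ) - 1) := by
  classical
  haveI : H.FiniteIndex := ⟨hH⟩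
  haveI := H.fintypeQuotientOfFiniteIndex
  obtain ⟨S, hScard, hSclosure⟩ := Group.rank_spec G
  obtain ⟨t, D, hrep, hbase1, htree⟩ :=
    exists_schreier_transversal H (S : Set G) hSclosure
  set base : G ⧸ H := ((1 : G) : G ⧸ H) with hbase
  -- the Schreier generators
  set hfun : (G ⧸ H) × G → G := fun z => (t (z.2 • z.1))⁻¹ * (z.2 * t z.1) with hfun_def
  have hmem : ∀ z : (G ⧸ H) × G, hfun z ∈ H := by
    intro ⟨q, s⟩
    show (t (s • q))⁻¹ * (s * t q) ∈ H
    rw [← QuotientGroup.eq, hrep (s • q), ← smul_eq_mul, ← MulAction.Quotient.smul_mk, hrep q]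
  set Tpairs : Finset ((G ⧸ H) × G) := Finset.univ ×ˢ S with hTp_def
  set T0 : Finset G := Tpairs.image hfun with hT0_def
  -- Schreier's lemma : T0 generates H
  have hgen : ∀ g : G, ∀ q : G ⧸ H,
      (t (g • q))⁻¹ * (g * t q) ∈ Subgroup.closure (↑T0 : Set G) := by
    let K : Subgroup G :=
      { carrier := {g | ∀ q : G ⧸ H, (t (g • q))⁻¹ * (g * t q) ∈ Subgroup.closure (↑T0 : Set G)}
        one_mem' := by
          intro q
          simp only [one_smul, one_mul, inv_mul_cancel]
          exact one_mem _
        mul_mem' := by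
          intro a b ha hb q
          have h1 := ha (b • q)
          have h2 := hb q
          have h3 := mul_mem h1 h2
          rw [mul_smul]
          convert h3 using 1
          group
        inv_mem' := by
          intro a ha q
          have h1 := inv_mem (ha (a⁻¹ • q))
          rw [smul_inv_smul] at h1
          convert h1 using 1
          group }
    have hSK : (S : Set G) ⊆ K := by
      intro s hs q
      exact Subgroup.subset_closure (Finset.mem_coe.mpr (Finset.mem_image.mpr
        ⟨(q, s), Finset.mem_product.mpr ⟨Finset.mem_univ q, hs⟩, rfl⟩))
    have hK : Subgroup.closure (S : Set G) ≤ K := (Subgroup.closure_le K).mpr hSK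
    rw [hSclosure] at hK
    exact fun g q => hK (Subgroup.mem_top g) q
  have hT0H : Subgroup.closure (↑T0 : Set G) = H := by
    refine le_antisymm ((Subgroup.closure_le H).mpr ?_) ?_
    · intro x hx
      obtain ⟨z, _, rfl⟩ := Finset.mem_image.mp (Finset.mem_coe.mp hx)
      exact hmem z
    · intro h hh
      have hq : h • base = base := by
        rw [hbase, MulAction.Quotient.smul_mk, smul_eq_mul, mul_one]
        exact QuotientGroup.eq.mpr (by simpa using inv_mem hh)
      have := hgen h base
      rwa [hq, hbase1, inv_one, one_mul, mul_one] at this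
  -- generators inside H
  set F : (G ⧸ H) × G → ↥H := fun z => (⟨hfun z, hmem z⟩ : ↥H) with hF_def
  set TH' : Finset ↥H := Tpairs.image F with hTH'_def
  have hTH'top : Subgroup.closure (↑TH' : Set ↥H) = ⊤ := by
    rw [eq_top_iff, ← Subgroup.map_subtype_le_map_subtype, MonoidHom.map_closure]
    have himg : H.subtype '' (↑TH' : Set ↥H) = (↑T0 : Set G) := by
      rw [hTH'_def, hT0_def, Finset.coe_image, Finset.coe_image, Set.image_image]
      rfl
    rw [himg, hT0H]
    exact Subgroup.map_subtype_le ⊤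
  set TH : Finset ↥H := TH'.erase 1 with hTH_def
  have hTHtop : Subgroup.closure (↑TH : Set ↥H) = ⊤ := by
    rw [eq_top_iff, ← hTH'top, Subgroup.closure_le]
    intro x hx
    rcases Classical.em (x = 1) with h1 | h1
    · rw [h1]; exact one_mem _
    · exact Subgroup.subset_closure (Finset.mem_coe.mpr (Finset.mem_erase.mpr ⟨h1, hx⟩))
  -- killed pairs
  set k : G ⧸ H → (G ⧸ H) × G := fun q =>
    if h : q ≠ base then
      @ite _ (q = (htree q h).choose • (htree q h).choose_spec.2.choose ∧
          t q = (htree q h).choose * t (htree q h).choose_spec.2.choose)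
        (Classical.propDecidable _)
        ((htree q h).choose_spec.2.choose, (htree q h).choose)
        (q, (htree q h).choose)
    else (base, 1) with hk_def
  have hk : ∀ q (h : q ≠ base), ∃ s p, s ∈ S ∧ D p < D q ∧ hfun (k q) = 1 ∧
      ((k q = (p, s) ∧ q = s • p) ∨ (k q = (q, s) ∧ p = s • q)) := by
    intro q h
    set s := (htree q h).choose with hs_def
    have hsS : s ∈ (S : Set G) := (htree q h).choose_spec.1
    set p := (htree q h).choose_spec.2.choose with hp_def
    have hspec : D p < D q ∧
        ((q = s • p ∧ t q = s * t p) ∨ (p = s • q ∧ t q = s⁻¹ * t p)) :=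
      (htree q h).choose_spec.2.choose_spec
    have hkq : k q = @ite _ (q = s • p ∧ t q = s * t p) (Classical.propDecidable _)
        (p, s) (q, s) := by
      rw [hk_def]
      simp only [dif_pos h]
      rfl
    rcases Classical.em (q = s • p ∧ t q = s * t p) with hc | hc
    · refine ⟨s, p, hsS, hspec.1, ?_, Or.inl ⟨by rw [hkq, if_pos hc], hc.1⟩⟩
      rw [hkq, if_pos hc]
      show (t (s • p))⁻¹ * (s * t p) = 1
      rw [← hc.1, ← hc.2, inv_mul_cancel]
    · have hc2 : p = s • q ∧ t q = s⁻¹ * t p := by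
        rcases hspec.2 with h1 | h1
        · exact absurd h1 hc
        · exact h1
      refine ⟨s, p, hsS, hspec.1, ?_, Or.inr ⟨by rw [hkq, if_neg hc], hc2.1⟩⟩
      rw [hkq, if_neg hc]
      show (t (s • q))⁻¹ * (s * t q) = 1
      rw [← hc2.1, hc2.2]
      group
  set Kp : Finset ((G ⧸ H) × G) := (Finset.univ.erase base).image k with hKp_def
  have hKsub : Kp ⊆ Tpairs := by
    intro x hx
    obtain ⟨q, hq, rfl⟩ := Finset.mem_image.mp hx
    have hqb : q ≠ base := (Finset.mem_erase.mp hq).1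
    obtain ⟨s, p, hsS, _, _, hcase⟩ := hk q hqb
    rcases hcase with ⟨he, _⟩ | ⟨he, _⟩ <;>
      · rw [he]
        exact Finset.mem_product.mpr ⟨Finset.mem_univ _, hsS⟩
  have hK1 : ∀ x ∈ Kp, hfun x = 1 := by
    intro x hx
    obtain ⟨q, hq, rfl⟩ := Finset.mem_image.mp hx
    exact (hk q (Finset.mem_erase.mp hq).1).choose_spec.choose_spec.2.2.1
  have hKcard : Kp.card = Fintype.card (G ⧸ H) - 1 := by
    rw [hKp_def, Finset.card_image_of_injOn, Finset.card_erase_of_mem (Finset.mem_univ base),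
      Finset.card_univ]
    intro q1 hq1 q2 hq2 he
    have hq1b : q1 ≠ base := (Finset.mem_erase.mp (Finset.mem_coe.mp hq1)).1
    have hq2b : q2 ≠ base := (Finset.mem_erase.mp (Finset.mem_coe.mp hq2)).1
    obtain ⟨s1, p1, _, hD1, _, hc1⟩ := hk q1 hq1b
    obtain ⟨s2, p2, _, hD2, _, hc2⟩ := hk q2 hq2b
    rcases hc1 with ⟨he1, hq1e⟩ | ⟨he1, hp1e⟩ <;> rcases hc2 with ⟨he2, hq2e⟩ | ⟨he2, hp2e⟩
    · -- both forward
      rw [he1, he2] at he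
      obtain ⟨hpe, hse⟩ := Prod.mk.injEq .. ▸ he
      rw [hq1e, hq2e, hpe, hse]
    · -- q1 forward, q2 backward
      rw [he1, he2] at he
      obtain ⟨hpe, hse⟩ := Prod.mk.injEq .. ▸ he
      exfalso
      have h1 : q1 = s2 • q2 := by rw [hq1e, hpe, hse]
      have h2 : p2 = q1 := by rw [hp2e, ← h1]
      rw [hpe] at hD1
      rw [h2] at hD2
      omega
    · -- q1 backward, q2 forward
      rw [he1, he2] at he
      obtain ⟨hpe, hse⟩ := Prod.mk.injEq .. ▸ he
      exfalso
      have h1 : q2 = s1 • q1 := by rw [hq2e, ← hpe, ← hse]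
      have h2 : p1 = q2 := by rw [hp1e, ← h1]
      rw [← hpe] at hD2
      rw [h2] at hD1
      omega
    · rw [he1, he2] at he
      exact (Prod.mk.injEq .. ▸ he).1
  -- counting
  have hsub2 : TH ⊆ (Tpairs \ Kp).image F := by
    intro x hx
    obtain ⟨h1, hx'⟩ := Finset.mem_erase.mp hx
    obtain ⟨z, hz, rfl⟩ := Finset.mem_image.mp hx'
    refine Finset.mem_image.mpr ⟨z, Finset.mem_sdiff.mpr ⟨hz, fun hzK => h1 ?_⟩, rfl⟩
    have := hK1 z hzK
    rw [hF_def]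
    exact Subtype.ext (by simpa using this)
  have hcard1 : TH.card ≤ Fintype.card (G ⧸ H) * S.card - (Fintype.card (G ⧸ H) - 1) := by
    calc TH.card ≤ ((Tpairs \ Kp).image F).card := Finset.card_le_card hsub2
      _ ≤ (Tpairs \ Kp).card := Finset.card_image_le
      _ = Tpairs.card - Kp.card := Finset.card_sdiff_of_subset hKsub
      _ = Fintype.card (G ⧸ H) * S.card - (Fintype.card (G ⧸ H) - 1) := by
          rw [hKcard, hTp_def, Finset.card_product, Finset.card_univ]
  have hrank : Group.rank ↥H ≤ TH.card := Group.rank_le hTHtop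
  -- arithmetic
  set n := Fintype.card (G ⧸ H) with hn_def
  set d := S.card with hd_def
  have hne : H.index = n := by
    rw [Subgroup.index_eq_card, Nat.card_eq_fintype_card]
  have hnpos : 1 ≤ n := Fintype.card_pos_iff.mpr ⟨base⟩
  have hd1 : n - 1 ≤ n * d := by
    rcases Nat.eq_zero_or_pos d with hd0 | hdpos
    · have hS0 : S = ∅ := Finset.card_eq_zero.mp hd0
      have : ∀ q : G ⧸ H, q = base := by
        intro q
        obtain ⟨g, rfl⟩ := QuotientGroup.mk_surjective q
        have hg : g ∈ Subgroup.closure (S : Set G) := hSclosure ▸ Subgroup.mem_top g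
        rw [hS0] at hg
        simp only [Finset.coe_empty, Subgroup.closure_empty, Subgroup.mem_bot] at hg
        rw [hg, hbase]
      have : n ≤ 1 := by
        rw [hn_def]
        exact Fintype.card_le_one_iff.mpr (fun a b => (this a).trans (this b).symm)
      omega
    · have : n ≤ n * d := Nat.le_mul_of_pos_right n hdpos
      omega
  have hfinal : Group.rank ↥H + (n - 1) ≤ n * d := by omega
  have hz : (Group.rank ↥H : ℤ) + ((n : ℤ) - 1) ≤ (n : ℤ) * (d : ℤ) := by
    have := Nat.cast_le (α := ℤ) |>.mpr hfinal
    push_cast [Nat.cast_sub hnpos] at this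
    linarith
  rw [hne, ← hScard]
  nlinarith [hz]
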